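/- Let T ≥ 1 be a horizon, s a state, and s^a a state adjacent to s. Then J^A_T(s^a, 0) < J^A_T(s^a, L) for every L ∈ {1,…,|s^a|} (i.e., 0 is the unique optimal offloading decision for s^a) if and only if J_T(s^a) − J_T(s) < C_o. -/
import Mathlib


open Finset

/-- System parameters: offloading cost, penalty cost, AMA probability,
local-processing probability, and arrival probabilities. -/
structure Params where
  Co : ℝ
  Cp : ℝ
  pa : ℝ
  mu : ℝ
  p : ℕ → ℝ

variable {N : ℕ}

/-- Partial sum `S_j(s) = ∑_{i=1}^j n_i` (components of `s` are 0-indexed). -/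
def S (s : Fin N → ℕ) (j : ℕ) : ℕ :=
  ∑ i ∈ Finset.univ.filter fun i : Fin N => (i : ℕ) < j, s i

/-- Total number of tasks `|s|`. -/
def tot (s : Fin N → ℕ) : ℕ := S s N

/-- The state obtained by offloading the `L` most imminent tasks of `s`:
`(s̄_L)_i = max(S_i(s) − L, 0) − max(S_{i−1}(s) − L, 0)` (truncated ℕ-subtraction). -/
def offload (s : Fin N → ℕ) (L : ℕ) : Fin N → ℕ :=
  fun i => (S s ((i : ℕ) + 1) - L) - (S s (i : ℕ) - L)

/-- Deadline shifting: `shift(s) = (n_2, …, n_N, 0)`. -/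
def shift (s : Fin N → ℕ) : Fin N → ℕ :=
  fun i => if h : (i : ℕ) + 1 < N then s ⟨(i : ℕ) + 1, h⟩ else 0

/-- Arrival vector `a_k`: the `k`-th standard unit vector for `1 ≤ k ≤ N`, zero for `k = 0`. -/
def avec (k : ℕ) : Fin N → ℕ := fun i => if (i : ℕ) + 1 = k then 1 else 0

/-- Local processing: remove one task of smallest deadline (identity on the zero state). -/
def proc (s : Fin N → ℕ) : Fin N → ℕ :=
  fun i => if s i ≠ 0 ∧ ∀ j : Fin N, j < i → s j = 0 then s i - 1 else s i

/-- `s''_{Lk} = shift(s̄_L) + a_k`. -/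
def sdd (s : Fin N → ℕ) (L k : ℕ) : Fin N → ℕ :=
  fun i => shift (offload s L) i + avec k i

/-- `s'_{Lk} = proc(s''_{Lk})`. -/
def sd (s : Fin N → ℕ) (L k : ℕ) : Fin N → ℕ := proc (sdd s L k)

/-- Instantaneous cost with the AMA: `𝒞^A(s,L) = C_o·L + C_p·max(n_1 − L, 0)`. -/
def costA (P : Params) (s : Fin N → ℕ) (L : ℕ) : ℝ :=
  P.Co * L + P.Cp * ((S s 1 - L : ℕ) : ℝ)

/-- Instantaneous cost without the AMA: `𝒞^Ā(s) = C_p·n_1`. -/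
def costNA (P : Params) (s : Fin N → ℕ) : ℝ := P.Cp * (S s 1 : ℕ)

/-- Expected instantaneous cost `𝒞(s,L)`. -/
def cost (P : Params) (s : Fin N → ℕ) (L : ℕ) : ℝ :=
  P.pa * costA P s L + (1 - P.pa) * costNA P s

/-- The dynamic-programming minimization, given the future-cost function `G`. -/
noncomputable def JofG (P : Params) (G : (Fin N → ℕ) → ℕ → ℝ) (s : Fin N → ℕ) : ℝ :=
  (Finset.range (tot s + 1)).inf' (Finset.nonempty_range_iff.mpr (Nat.succ_ne_zero _))
    fun L => cost P s L + P.pa * G s L + (1 - P.pa) * G s 0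

/-- `G^A_T(s,L)`, defined by recursion on the horizon `T`. -/
noncomputable def GA (P : Params) : ℕ → (Fin N → ℕ) → ℕ → ℝ
  | 0, _, _ => 0
  | T + 1, s, L =>
      P.mu * ∑ k ∈ Finset.range (N + 1), P.p k * JofG P (GA P T) (sd s L k)
        + (1 - P.mu) * ∑ k ∈ Finset.range (N + 1), P.p k * JofG P (GA P T) (sdd s L k)

/-- `J_T(s)` for horizon `T ≥ 1`. -/
noncomputable def J (P : Params) (T : ℕ) (s : Fin N → ℕ) : ℝ := JofG P (GA P (T - 1)) s

/-- `J^A_T(s,L) = 𝒞^A(s,L) + G^A_{T−1}(s,L)`. -/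
noncomputable def JA (P : Params) (T : ℕ) (s : Fin N → ℕ) (L : ℕ) : ℝ :=
  costA P s L + GA P (T - 1) s L

/-- `J^A_T(s) = min_{0 ≤ L ≤ |s|} J^A_T(s,L)`. -/
noncomputable def JAmin (P : Params) (T : ℕ) (s : Fin N → ℕ) : ℝ :=
  (Finset.range (tot s + 1)).inf' (Finset.nonempty_range_iff.mpr (Nat.succ_ne_zero _))
    (JA P T s)

/-- `J^Ā_T(s) = 𝒞^Ā(s) + G^A_{T−1}(s,0)`. -/
noncomputable def JNA (P : Params) (T : ℕ) (s : Fin N → ℕ) : ℝ :=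
  costNA P s + GA P (T - 1) s 0

/-- The optimal offloading decision: the smallest minimizer of `L ↦ J^A_T(s,L)`
over `{0,…,|s|}`. -/
noncomputable def Lstar (P : Params) (T : ℕ) (s : Fin N → ℕ) : ℕ :=
  sInf {L | L ≤ tot s ∧ ∀ L' ≤ tot s, JA P T s L ≤ JA P T s L'}

/-- The smallest deadline `d(s)` carried by a task of `s` (1-indexed). -/
noncomputable def dmin (s : Fin N → ℕ) : ℕ := sInf {j | 0 < S s j}

/-- `sa` is adjacent to `s`. -/
def Adjacent (s sa : Fin N → ℕ) : Prop :=
  (s ≠ 0 ∧ ∃ j, 1 ≤ j ∧ j ≤ dmin s ∧ sa = s + avec j) ∨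
    (s = 0 ∧ ∃ j, 1 ≤ j ∧ j ≤ N ∧ sa = avec j)

/-- `L_g`: the number of excessive tasks, `max_{1 ≤ j ≤ M} max(S_j(s) − (j−1), 0)`. -/
def Lg (s : Fin N → ℕ) (M : ℕ) : ℕ := (Finset.Icc 1 M).sup fun j => S s j - (j - 1)

/-- `Γ_j = ∑_{i=1}^j γ_i` for the parameters `γ` of Definition 2
(`γ_1 = 0`, `γ_j = min(n_j, j−1−∑_{i<j} γ_i)` for `2 ≤ j ≤ M`, `γ_j = 0` for `j > M`). -/
def Gam (s : Fin N → ℕ) (M : ℕ) : ℕ → ℕ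
  | 0 => 0
  | j + 1 =>
      if 2 ≤ j + 1 ∧ j + 1 ≤ M then
        Gam s M j + min (S s (j + 1) - S s j) (j - Gam s M j)
      else Gam s M j

/-- The lean state of `s`: `n^ℓ_i = max(γ_i, n^r_i)` where `s^r = s̄_{L_g}`. -/
def leanState (s : Fin N → ℕ) (M : ℕ) : Fin N → ℕ :=
  fun i => max (Gam s M ((i : ℕ) + 1) - Gam s M (i : ℕ)) (offload s (Lg s M) i)

/-- `F(s,L) = J^Ā_T(s̄_L) + L·C_o`. -/
noncomputable def F (P : Params) (T : ℕ) (s : Fin N → ℕ) (L : ℕ) : ℝ :=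
  JNA P T (offload s L) + L * P.Co

namespace OffloadAux

variable {N : ℕ}

lemma S_eq (x : Fin N → ℕ) (j : ℕ) :
    S x j = ∑ i : Fin N, if (i : ℕ) < j then x i else 0 := by
  rw [S, Finset.sum_filter]

lemma S_zero (x : Fin N → ℕ) : S x 0 = 0 := by
  simp [S_eq]

lemma S_mono (x : Fin N → ℕ) : Monotone (S x) := by
  intro a b hab
  rw [S_eq, S_eq]
  apply Finset.sum_le_sum
  intro i _
  split_ifs with h1 h2 <;> omega

lemma S_succ (x : Fin N → ℕ) {j : ℕ} (h : j < N) :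
    S x (j + 1) = S x j + x ⟨j, h⟩ := by
  rw [S_eq, S_eq]
  have : ∀ i : Fin N, (if (i : ℕ) < j + 1 then x i else 0) =
      (if (i : ℕ) < j then x i else 0) + (if i = ⟨j, h⟩ then x i else 0) := by
    intro i
    have : i = (⟨j, h⟩ : Fin N) ↔ (i : ℕ) = j := by
      constructor
      · intro hh; rw [hh]
      · intro hh; exact Fin.ext hh
    split_ifs with h1 h2 h3 h4 h5 <;> simp_all <;> omega
  rw [Finset.sum_congr rfl (fun i _ => this i), Finset.sum_add_distrib,
    Finset.sum_ite_eq' Finset.univ (⟨j, h⟩ : Fin N) x]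
  simp

lemma S_succ_ge (x : Fin N → ℕ) {j : ℕ} (h : N ≤ j) :
    S x (j + 1) = S x j := by
  rw [S_eq, S_eq]
  apply Finset.sum_congr rfl
  intro i _
  have := i.isLt
  split_ifs <;> omega

lemma S_stab (x : Fin N → ℕ) {j : ℕ} (h : N ≤ j) : S x j = S x N := by
  induction j with
  | zero =>
    have h0 : N = 0 := Nat.le_zero.mp h
    subst h0
    rfl
  | succ n ih =>
    rcases Nat.lt_or_ge n N with h1 | h1
    · have : n + 1 = N := by omega
      rw [this]
    · rw [S_succ_ge x h1, ih h1]

lemma S_le_tot (x : Fin N → ℕ) (j : ℕ) : S x j ≤ tot x := by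
  show S x j ≤ S x N
  rcases Nat.le_total j N with h | h
  · exact S_mono x h
  · rw [S_stab x h]

lemma funext_S {x y : Fin N → ℕ} (h : ∀ j, S x j = S y j) : x = y := by
  funext i
  have h1 := S_succ x i.isLt
  have h2 := S_succ y i.isLt
  have h3 := h (i : ℕ)
  have h4 := h ((i : ℕ) + 1)
  have : (⟨(i : ℕ), i.isLt⟩ : Fin N) = i := rfl
  rw [this] at h1 h2
  omega

lemma S_add (x y : Fin N → ℕ) (j : ℕ) : S (x + y) j = S x j + S y j := by
  rw [S_eq, S_eq, S_eq, ← Finset.sum_add_distrib]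
  apply Finset.sum_congr rfl
  intro i _
  split_ifs <;> simp [Pi.add_apply]

/-- indicator of the arrival vector at the cumulative level -/
def ak (N k j : ℕ) : ℕ := if 1 ≤ k ∧ k ≤ j ∧ k ≤ N then 1 else 0

lemma S_avec {k : ℕ} (j : ℕ) : S (avec k : Fin N → ℕ) j = ak N k j := by
  induction j with
  | zero => rw [S_zero]; unfold ak; split_ifs <;> omega
  | succ n ih =>
    rcases Nat.lt_or_ge n N with h | h
    · rw [S_succ _ h, ih]
      have : (avec k : Fin N → ℕ) ⟨n, h⟩ = if n + 1 = k then 1 else 0 := rfl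
      rw [this]
      unfold ak
      split_ifs <;> omega
    · rw [S_succ_ge _ h, ih]
      unfold ak
      split_ifs <;> omega

lemma S_add_avec (x : Fin N → ℕ) (k j : ℕ) :
    S (x + avec k) j = S x j + ak N k j := by
  rw [S_add, S_avec]

lemma S_offload (x : Fin N → ℕ) (L j : ℕ) : S (offload x L) j = S x j - L := by
  induction j with
  | zero => rw [S_zero, S_zero]; omega
  | succ n ih =>
    rcases Nat.lt_or_ge n N with h | h
    · rw [S_succ _ h, ih]
      have h2 : offload x L ⟨n, h⟩ = (S x (n + 1) - L) - (S x n - L) := rfl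
      rw [h2]
      have := S_mono x (show n ≤ n + 1 by omega)
      omega
    · rw [S_succ_ge _ h, ih, S_succ_ge x h]

lemma offload_zero (x : Fin N → ℕ) : offload x 0 = x := by
  apply funext_S
  intro j
  rw [S_offload]
  omega

lemma offload_offload (x : Fin N → ℕ) (a b : ℕ) :
    offload (offload x a) b = offload x (a + b) := by
  apply funext_S
  intro j
  rw [S_offload, S_offload, S_offload]
  omega

lemma offload_large {x : Fin N → ℕ} {L : ℕ} (h : tot x ≤ L) :
    offload x L = offload x (tot x) := by
  apply funext_S
  intro j
  rw [S_offload, S_offload]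
  have h1 := S_le_tot x j
  have h2 : tot x = S x N := rfl
  omega

lemma S_shift (x : Fin N → ℕ) (j : ℕ) : S (shift x) j = S x (j + 1) - S x 1 := by
  induction j with
  | zero => rw [S_zero]; norm_num
  | succ n ih =>
    rcases Nat.lt_or_ge n N with h | h
    · rw [S_succ _ h, ih]
      by_cases h2 : n + 1 < N
      · have h3 : shift x ⟨n, h⟩ = x ⟨n + 1, h2⟩ := by
          show (if h' : n + 1 < N then x ⟨n+1, h'⟩ else 0) = _
          rw [dif_pos h2]
        rw [h3]
        have h4 := S_succ x h2
        have h5 := S_mono x (show 1 ≤ n + 1 by omega)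
        omega
      · have h3 : shift x ⟨n, h⟩ = 0 := by
          show (if h' : n + 1 < N then x ⟨n+1, h'⟩ else 0) = _
          rw [dif_neg h2]
        rw [h3]
        have h4 := S_succ_ge x (show N ≤ n + 1 by omega)
        omega
    · rw [S_succ_ge _ h, ih, S_succ_ge x (show N ≤ n + 1 by omega)]

lemma proc_eq_offload_one (x : Fin N → ℕ) : proc x = offload x 1 := by
  funext i
  show (if x i ≠ 0 ∧ ∀ j : Fin N, j < i → x j = 0 then x i - 1 else x i) =
    (S x ((i : ℕ) + 1) - 1) - (S x (i : ℕ) - 1)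
  have hsucc := S_succ x i.isLt
  have : (⟨(i : ℕ), i.isLt⟩ : Fin N) = i := rfl
  rw [this] at hsucc
  by_cases h0 : S x (i : ℕ) = 0
  · -- all earlier components are zero
    have hz : ∀ j : Fin N, j < i → x j = 0 := by
      intro j hj
      have h1 : (if (j : ℕ) < (i : ℕ) then x j else 0) ≤ S x (i : ℕ) := by
        rw [S_eq]
        exact Finset.single_le_sum (f := fun t : Fin N => if (t : ℕ) < (i : ℕ) then x t else 0)
          (fun t _ => by positivity) (Finset.mem_univ j)
      rw [if_pos (show (j : ℕ) < (i : ℕ) from hj)] at h1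
      omega
    by_cases hx : x i = 0
    · rw [if_neg (by tauto)]
      omega
    · rw [if_pos ⟨hx, hz⟩]
      omega
  · -- some earlier component nonzero
    have : ¬(x i ≠ 0 ∧ ∀ j : Fin N, j < i → x j = 0) := by
      rintro ⟨-, hall⟩
      -- S x i = sum over j < i of x j = 0
      have : S x (i : ℕ) = 0 := by
        rw [S_eq]
        apply Finset.sum_eq_zero
        intro j _
        split_ifs with hj
        · exact hall j hj
        · rfl
      omega
    rw [if_neg this]
    omega

end OffloadAux
namespace OffloadAux

variable {N : ℕ}

/-- Build a state from a cumulative function. -/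
def ofS (N : ℕ) (σ : ℕ → ℕ) : Fin N → ℕ := fun i => σ ((i : ℕ) + 1) - σ (i : ℕ)

/-- A cumulative function is *nice* if it is monotone, vanishes at 0 and is
constant from `N` on. -/
def Nice (N : ℕ) (σ : ℕ → ℕ) : Prop :=
  Monotone σ ∧ σ 0 = 0 ∧ ∀ j, N ≤ j → σ j = σ N

lemma S_ofS {σ : ℕ → ℕ} (h : Nice N σ) (j : ℕ) : S (ofS N σ) j = σ j := by
  obtain ⟨hm, h0, hc⟩ := h
  induction j with
  | zero => rw [S_zero, h0]
  | succ n ih =>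
    rcases Nat.lt_or_ge n N with hn | hn
    · rw [S_succ _ hn, ih]
      have : ofS N σ ⟨n, hn⟩ = σ (n + 1) - σ n := rfl
      rw [this]
      have := hm (show n ≤ n + 1 by omega)
      omega
    · rw [S_succ_ge _ hn, ih, hc (n+1) (by omega), hc n hn]

lemma nice_S (x : Fin N → ℕ) : Nice N (S x) :=
  ⟨S_mono x, S_zero x, fun j hj => S_stab x hj⟩

/-- upper rounded midpoint of two offloaded cumulative profiles -/
def mUp (x y : Fin N → ℕ) (a b : ℕ) : ℕ → ℕ :=
  fun j => (S x j + S y j + 1) / 2 - (a + b + 1) / 2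

/-- lower rounded midpoint -/
def mDn (x y : Fin N → ℕ) (a b : ℕ) : ℕ → ℕ :=
  fun j => (S x j + S y j) / 2 - (a + b) / 2

lemma nice_mUp (x y : Fin N → ℕ) (a b : ℕ) : Nice N (mUp x y a b) := by
  refine ⟨fun i j hij => ?_, ?_, fun j hj => ?_⟩ <;> unfold mUp
  · have h1 := S_mono x hij
    have h2 := S_mono y hij
    omega
  · rw [S_zero, S_zero]; omega
  · rw [S_stab x hj, S_stab y hj]

lemma nice_mDn (x y : Fin N → ℕ) (a b : ℕ) : Nice N (mDn x y a b) := by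
  refine ⟨fun i j hij => ?_, ?_, fun j hj => ?_⟩ <;> unfold mDn
  · have h1 := S_mono x hij
    have h2 := S_mono y hij
    omega
  · rw [S_zero, S_zero]; omega
  · rw [S_stab x hj, S_stab y hj]

lemma S_mUp (x y : Fin N → ℕ) (a b : ℕ) (j : ℕ) :
    S (ofS N (mUp x y a b)) j = (S x j + S y j + 1) / 2 - (a + b + 1) / 2 :=
  S_ofS (nice_mUp x y a b) j

lemma S_mDn (x y : Fin N → ℕ) (a b : ℕ) (j : ℕ) :
    S (ofS N (mDn x y a b)) j = (S x j + S y j) / 2 - (a + b) / 2 :=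
  S_ofS (nice_mDn x y a b) j

/-! ## The abstract "good function" invariant -/

/-- The three structural properties propagated through the dynamic program:
monotonicity w.r.t. cumulative dominance, `C_p`-Lipschitz continuity in each
arrival direction, and extended discrete midpoint convexity (L♮-convexity of
`(x, λ) ↦ Φ(x̄_λ)`). -/
structure GoodF (P : Params) (N : ℕ) (Φ : (Fin N → ℕ) → ℝ) : Prop where
  mono : ∀ x y : Fin N → ℕ, (∀ j, S x j ≤ S y j) → Φ x ≤ Φ y
  lip : ∀ (x : Fin N → ℕ) (k : ℕ), 1 ≤ k → k ≤ N → Φ (x + avec k) ≤ Φ x + P.Cp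
  mcl : ∀ (x y : Fin N → ℕ) (a b : ℕ),
      Φ (ofS N (mUp x y a b)) + Φ (ofS N (mDn x y a b)) ≤
        Φ (offload x a) + Φ (offload y b)

variable {P : Params} {Φ : (Fin N → ℕ) → ℝ}

/-- one-step Lipschitz across a dominated arrival -/
lemma GoodF.lip_dom (g : GoodF P N Φ) {A B : Fin N → ℕ} {k : ℕ} (hk1 : 1 ≤ k) (hk2 : k ≤ N)
    (h : ∀ j, S A j ≤ S B j + ak N k j) : Φ A ≤ Φ B + P.Cp := by
  calc Φ A ≤ Φ (B + avec k) := g.mono _ _ (fun j => by rw [S_add_avec]; exact h j)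
    _ ≤ Φ B + P.Cp := g.lip B k hk1 hk2

/-- iterated Lipschitz along the all-ones (deadline-1 arrival) direction -/
lemma GoodF.lip_iter (g : GoodF P N Φ) (hN : 1 ≤ N) (hCp : 0 ≤ P.Cp)
    (c : ℕ) {A B : Fin N → ℕ}
    (h : ∀ j, S A j ≤ S B j + c * ak N 1 j) : Φ A ≤ Φ B + c * P.Cp := by
  induction c generalizing B with
  | zero =>
    push_cast
    simpa using g.mono A B (fun j => by have := h j; omega)
  | succ n ih =>
    have step : Φ A ≤ Φ (B + avec 1) + n * P.Cp := by
      apply ih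
      intro j
      rw [S_add_avec]
      have := h j
      unfold ak at *
      split_ifs at * <;> omega
    have := g.lip B 1 le_rfl hN
    push_cast
    push_cast at step
    linarith

end OffloadAux
namespace OffloadAux

variable {N : ℕ} {P : Params} {Φ : (Fin N → ℕ) → ℝ}

/-- minimal cost-to-go of the offloading minimisation -/
noncomputable def MF (P : Params) (Φ : (Fin N → ℕ) → ℝ) (x : Fin N → ℕ) : ℝ :=
  (Finset.range (tot x + 1)).inf' (Finset.nonempty_range_iff.mpr (Nat.succ_ne_zero _))
    fun L => P.Co * L + Φ (offload x L)

/-- abstract one-step value function -/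
noncomputable def JJ (P : Params) (Φ : (Fin N → ℕ) → ℝ) (x : Fin N → ℕ) : ℝ :=
  P.pa * MF P Φ x + (1 - P.pa) * Φ x

lemma MF_le_of_mem (x : Fin N → ℕ) {L : ℕ} (h : L ≤ tot x) :
    MF P Φ x ≤ P.Co * L + Φ (offload x L) :=
  Finset.inf'_le _ (Finset.mem_range.mpr (by omega))

lemma MF_le (hCo : 0 ≤ P.Co) (x : Fin N → ℕ) (L : ℕ) :
    MF P Φ x ≤ P.Co * L + Φ (offload x L) := by
  rcases Nat.le_total L (tot x) with h | h
  · exact MF_le_of_mem x h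
  · rw [offload_large h]
    calc MF P Φ x ≤ P.Co * (tot x) + Φ (offload x (tot x)) := MF_le_of_mem x le_rfl
      _ ≤ P.Co * L + Φ (offload x (tot x)) := by
          have : (tot x : ℝ) ≤ L := by exact_mod_cast h
          nlinarith

lemma MF_exists (x : Fin N → ℕ) :
    ∃ L ≤ tot x, MF P Φ x = P.Co * L + Φ (offload x L) := by
  obtain ⟨L, hL, hval⟩ := Finset.exists_mem_eq_inf'
    (Finset.nonempty_range_iff.mpr (Nat.succ_ne_zero (tot x)))
    (fun L => P.Co * L + Φ (offload x L))
  exact ⟨L, by have := Finset.mem_range.mp hL; omega, hval⟩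

lemma mono_MF (g : GoodF P N Φ) (hCo : 0 ≤ P.Co) (x y : Fin N → ℕ)
    (h : ∀ j, S x j ≤ S y j) : MF P Φ x ≤ MF P Φ y := by
  obtain ⟨L, hL, hval⟩ := MF_exists (P := P) (Φ := Φ) y
  rw [hval]
  calc MF P Φ x ≤ P.Co * L + Φ (offload x L) := MF_le hCo x L
    _ ≤ P.Co * L + Φ (offload y L) := by
        have := g.mono (offload x L) (offload y L)
          (fun j => by rw [S_offload, S_offload]; have := h j; omega)
        linarith

lemma good_JJ (g : GoodF P N Φ) (hN : 1 ≤ N) (hCo : 0 ≤ P.Co) (hCp : 0 ≤ P.Cp)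
    (hpa0 : 0 ≤ P.pa) (hpa1 : P.pa ≤ 1) : GoodF P N (JJ P Φ) := by
  constructor
  · -- mono
    intro x y h
    have h1 := mono_MF g hCo x y h
    have h2 := g.mono x y h
    unfold JJ
    nlinarith
  · -- lip
    intro x k hk1 hk2
    have hMF : MF P Φ (x + avec k) ≤ MF P Φ x + P.Cp := by
      obtain ⟨L, hL, hval⟩ := MF_exists (P := P) (Φ := Φ) x
      rw [hval]
      calc MF P Φ (x + avec k) ≤ P.Co * L + Φ (offload (x + avec k) L) := MF_le hCo _ L
        _ ≤ P.Co * L + (Φ (offload x L) + P.Cp) := by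
            have := g.lip_dom hk1 hk2 (A := offload (x + avec k) L) (B := offload x L)
              (fun j => by
                rw [S_offload, S_offload, S_add_avec]
                unfold ak; split_ifs <;> omega)
            linarith
        _ = P.Co * L + Φ (offload x L) + P.Cp := by ring
    have hΦ := g.lip x k hk1 hk2
    unfold JJ
    nlinarith
  · -- mcl
    intro x y a b
    have hMF : MF P Φ (ofS N (mUp x y a b)) + MF P Φ (ofS N (mDn x y a b)) ≤
        MF P Φ (offload x a) + MF P Φ (offload y b) := by
      obtain ⟨L1, hL1, hv1⟩ := MF_exists (P := P) (Φ := Φ) (offload x a)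
      obtain ⟨L2, hL2, hv2⟩ := MF_exists (P := P) (Φ := Φ) (offload y b)
      rw [hv1, hv2, offload_offload, offload_offload]
      set A := a + L1 with hA
      set B := b + L2 with hB
      set Lu := (A + B + 1) / 2 - (a + b + 1) / 2 with hLu
      set Ld := (A + B) / 2 - (a + b) / 2 with hLd
      have idU : offload (ofS N (mUp x y a b)) Lu = ofS N (mUp x y A B) := by
        apply funext_S
        intro j
        rw [S_offload, S_mUp, S_mUp]
        omega
      have idD : offload (ofS N (mDn x y a b)) Ld = ofS N (mDn x y A B) := by
        apply funext_S
        intro j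
        rw [S_offload, S_mDn, S_mDn]
        omega
      have h1 : MF P Φ (ofS N (mUp x y a b)) ≤ P.Co * Lu + Φ (ofS N (mUp x y A B)) := by
        have := MF_le (P := P) (Φ := Φ) hCo (ofS N (mUp x y a b)) Lu
        rwa [idU] at this
      have h2 : MF P Φ (ofS N (mDn x y a b)) ≤ P.Co * Ld + Φ (ofS N (mDn x y A B)) := by
        have := MF_le (P := P) (Φ := Φ) hCo (ofS N (mDn x y a b)) Ld
        rwa [idD] at this
      have h3 := g.mcl x y A B
      have hsum : Lu + Ld = L1 + L2 := by omega
      have hsum' : (Lu : ℝ) + (Ld : ℝ) = (L1 : ℝ) + (L2 : ℝ) := by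
        exact_mod_cast hsum
      nlinarith [h1, h2, h3, hsum']
    have hΦ := g.mcl x y a b
    unfold JJ
    nlinarith

end OffloadAux
namespace OffloadAux

/-! ## Pure arithmetic key facts for the midpoint/shift interchange -/

lemma keyU (a b β β' α α' l1 l2 m1 m2 i : ℕ)
    (h1 : β ≤ α) (h2 : β' ≤ α') (hi : i ≤ 1)
    (hl1 : l1 = a ∨ l1 = β) (hl1a : a ≤ l1) (hl1b : β ≤ l1)
    (hl2 : l2 = b ∨ l2 = β') (hl2a : b ≤ l2) (hl2b : β' ≤ l2)
    (hm1 : m1 = α ∨ m1 = l1) (hm1a : α ≤ m1) (hm1b : l1 ≤ m1)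
    (hm2 : m2 = α' ∨ m2 = l2) (hm2a : α' ≤ m2) (hm2b : l2 ≤ m2) :
    (((α + α' + 1) / 2 - (a + b + 1) / 2) - ((β + β' + 1) / 2 - (a + b + 1) / 2)) + i ≤
      ((m1 + i + (m2 + i) + 1) / 2 - (l1 + l2 + 1) / 2)
      + (((l1 + l2 + 1) / 2 - (a + b + 1) / 2) - ((β + β' + 1) / 2 - (a + b + 1) / 2)) := by
  rcases hl1 with h | h <;> rcases hl2 with h' | h' <;> rcases hm1 with h'' | h'' <;>
    rcases hm2 with h''' | h''' <;> subst_vars <;> omega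

lemma keyUmu (a b β β' α α' l1 l2 m1 m2 i : ℕ)
    (h1 : β ≤ α) (h2 : β' ≤ α') (hi : i ≤ 1)
    (hl1 : l1 = a ∨ l1 = β) (hl1a : a ≤ l1) (hl1b : β ≤ l1)
    (hl2 : l2 = b ∨ l2 = β') (hl2a : b ≤ l2) (hl2b : β' ≤ l2)
    (hm1 : m1 = α ∨ m1 = l1) (hm1a : α ≤ m1) (hm1b : l1 ≤ m1)
    (hm2 : m2 = α' ∨ m2 = l2) (hm2a : α' ≤ m2) (hm2b : l2 ≤ m2) :
    ((((α + α' + 1) / 2 - (a + b + 1) / 2) - ((β + β' + 1) / 2 - (a + b + 1) / 2)) + i) - 1 ≤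
      ((m1 + i + (m2 + i) + 1) / 2 - (l1 + 1 + (l2 + 1) + 1) / 2)
      + (((l1 + l2 + 1) / 2 - (a + b + 1) / 2) - ((β + β' + 1) / 2 - (a + b + 1) / 2)) := by
  rcases hl1 with h | h <;> rcases hl2 with h' | h' <;> rcases hm1 with h'' | h'' <;>
    rcases hm2 with h''' | h''' <;> subst_vars <;> omega

lemma keyD (a b β β' α α' l1 l2 m1 m2 i : ℕ)
    (h1 : β ≤ α) (h2 : β' ≤ α') (hi : i ≤ 1)
    (hl1 : l1 = a ∨ l1 = β) (hl1a : a ≤ l1) (hl1b : β ≤ l1)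
    (hl2 : l2 = b ∨ l2 = β') (hl2a : b ≤ l2) (hl2b : β' ≤ l2)
    (hm1 : m1 = α ∨ m1 = l1) (hm1a : α ≤ m1) (hm1b : l1 ≤ m1)
    (hm2 : m2 = α' ∨ m2 = l2) (hm2a : α' ≤ m2) (hm2b : l2 ≤ m2) :
    (((α + α') / 2 - (a + b) / 2) - ((β + β') / 2 - (a + b) / 2)) + i ≤
      ((m1 + i + (m2 + i)) / 2 - (l1 + l2) / 2)
      + (((l1 + l2) / 2 - (a + b) / 2) - ((β + β') / 2 - (a + b) / 2)) := by
  rcases hl1 with h | h <;> rcases hl2 with h' | h' <;> rcases hm1 with h'' | h'' <;>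
    rcases hm2 with h''' | h''' <;> subst_vars <;> omega

lemma keyDmu (a b β β' α α' l1 l2 m1 m2 i : ℕ)
    (h1 : β ≤ α) (h2 : β' ≤ α') (hi : i ≤ 1)
    (hl1 : l1 = a ∨ l1 = β) (hl1a : a ≤ l1) (hl1b : β ≤ l1)
    (hl2 : l2 = b ∨ l2 = β') (hl2a : b ≤ l2) (hl2b : β' ≤ l2)
    (hm1 : m1 = α ∨ m1 = l1) (hm1a : α ≤ m1) (hm1b : l1 ≤ m1)
    (hm2 : m2 = α' ∨ m2 = l2) (hm2a : α' ≤ m2) (hm2b : l2 ≤ m2) :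
    ((((α + α') / 2 - (a + b) / 2) - ((β + β') / 2 - (a + b) / 2)) + i) - 1 ≤
      ((m1 + i + (m2 + i)) / 2 - (l1 + 1 + (l2 + 1)) / 2)
      + (((l1 + l2) / 2 - (a + b) / 2) - ((β + β') / 2 - (a + b) / 2)) := by
  rcases hl1 with h | h <;> rcases hl2 with h' | h' <;> rcases hm1 with h'' | h'' <;>
    rcases hm2 with h''' | h''' <;> subst_vars <;> omega

lemma keyC (a b β β' l1 l2 : ℕ)
    (hl1 : l1 = a ∨ l1 = β) (hl1a : a ≤ l1) (hl1b : β ≤ l1)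
    (hl2 : l2 = b ∨ l2 = β') (hl2a : b ≤ l2) (hl2b : β' ≤ l2) :
    ((β + β' + 1) / 2 - (a + b + 1) / 2) + ((β + β') / 2 - (a + b) / 2)
      + (((l1 + l2 + 1) / 2 - (a + b + 1) / 2) - ((β + β' + 1) / 2 - (a + b + 1) / 2))
      + (((l1 + l2) / 2 - (a + b) / 2) - ((β + β') / 2 - (a + b) / 2))
      ≤ (β - a) + (β' - b) := by
  rcases hl1 with h | h <;> rcases hl2 with h' | h' <;> subst_vars <;> omega

lemma keyF6 (a β α l1 i : ℕ) (h1 : β ≤ α) (hi : i ≤ 1)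
    (hl1 : l1 = a ∨ l1 = β) (hl1a : a ≤ l1) (hl1b : β ≤ l1)
    (m1 : ℕ) (hm1 : m1 = α ∨ m1 = l1) (hm1a : α ≤ m1) (hm1b : l1 ≤ m1) :
    m1 + i - l1 = ((α - a) - (β - a)) + i := by
  rcases hl1 with h | h <;> rcases hm1 with h'' | h'' <;> subst_vars <;> omega

end OffloadAux
namespace OffloadAux

variable {N : ℕ} {P : Params} {Ψ : (Fin N → ℕ) → ℝ}

lemma S_shift_avec (v : Fin N → ℕ) (k j : ℕ) :
    S (shift v + avec k) j = (S v (j + 1) - S v 1) + ak N k j := by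
  rw [S_add_avec, S_shift]

lemma ak_zero (k : ℕ) : ak N k 0 = 0 := by unfold ak; split_ifs <;> omega

lemma ak_le_one (k j : ℕ) : ak N k j ≤ 1 := by unfold ak; split_ifs <;> omega

lemma ak_one_succ (hN : 1 ≤ N) (n : ℕ) : ak N 1 (n + 1) = 1 := by
  unfold ak; split_ifs <;> omega

/-- per-arrival one-step expected continuation -/
noncomputable def kterm (P : Params) (Ψ : (Fin N → ℕ) → ℝ) (v : Fin N → ℕ) (k : ℕ) : ℝ :=
  P.mu * Ψ (offload (shift v + avec k) 1) + (1 - P.mu) * Ψ (shift v + avec k)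

/-- abstract one-step dynamics operator -/
noncomputable def NSt (P : Params) (Ψ : (Fin N → ℕ) → ℝ) (v : Fin N → ℕ) : ℝ :=
  P.Cp * (S v 1 : ℝ) + ∑ k ∈ Finset.range (N + 1), P.p k * kterm P Ψ v k

/-- the λ-realigned auxiliary state -/
def real1 (N : ℕ) (x : Fin N → ℕ) (l k : ℕ) : Fin N → ℕ :=
  ofS N (fun j => if j = 0 then 0 else max (S x (j + 1)) l + ak N k j)

lemma nice_real1 (hN : 1 ≤ N) (x : Fin N → ℕ) {k : ℕ} (l : ℕ) (hk : k ≤ N) :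
    Nice N (fun j => if j = 0 then 0 else max (S x (j + 1)) l + ak N k j) := by
  refine ⟨?_, by simp, ?_⟩
  · intro i j hij
    dsimp only
    rcases Nat.eq_zero_or_pos i with rfl | hi
    · rw [if_pos rfl]; exact Nat.zero_le _
    · rw [if_neg (by omega), if_neg (by omega)]
      have h1 : S x (i + 1) ≤ S x (j + 1) := S_mono x (by omega)
      have h2 : ak N k i ≤ ak N k j := by unfold ak; split_ifs <;> omega
      exact Nat.add_le_add (max_le_max h1 le_rfl) h2
  · intro j hj
    dsimp only
    rw [if_neg (by omega), if_neg (by omega)]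
    have h1 : S x (j + 1) = S x (N + 1) := by
      rw [S_stab x (by omega), S_stab x (by omega : N ≤ N + 1)]
    have h2 : ak N k j = ak N k N := by unfold ak; split_ifs <;> omega
    rw [h1, h2]

lemma S_real1 (hN : 1 ≤ N) (x : Fin N → ℕ) {k : ℕ} (l : ℕ) (hk : k ≤ N) (j : ℕ) :
    S (real1 N x l k) j = if j = 0 then 0 else max (S x (j + 1)) l + ak N k j :=
  S_ofS (nice_real1 hN x l hk) j

/-- the crucial realignment identity: offloading the auxiliary state by the
aligned amount gives exactly the one-step successor state. -/
lemma real1_offload (hN : 1 ≤ N) (x : Fin N → ℕ) {k a : ℕ} (hk : k ≤ N) :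
    offload (real1 N x (max a (S x 1)) k) (max a (S x 1)) =
      shift (offload x a) + avec k := by
  apply funext_S
  intro j
  rw [S_offload, S_real1 hN x _ hk, S_shift_avec, S_offload, S_offload]
  cases j with
  | zero =>
    rw [if_pos rfl, ak_zero]
    have h01 : S x (0 + 1) = S x 1 := rfl
    omega
  | succ n =>
    rw [if_neg (by omega)]
    have hβ : S x 1 ≤ S x (n + 1 + 1) := S_mono x (by omega)
    have hi : ak N k (n + 1) ≤ 1 := ak_le_one _ _
    have := keyF6 a (S x 1) (S x (n + 1 + 1)) (max a (S x 1)) (ak N k (n + 1)) hβ hi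
      (max_choice _ _) (le_max_left _ _) (le_max_right _ _)
      (max (S x (n + 1 + 1)) (max a (S x 1))) (max_choice _ _)
      (le_max_left _ _) (le_max_right _ _)
    omega

lemma real1_offload' (hN : 1 ≤ N) (x : Fin N → ℕ) {k a : ℕ} (hk : k ≤ N) :
    offload (real1 N x (max a (S x 1)) k) (max a (S x 1) + 1) =
      offload (shift (offload x a) + avec k) 1 := by
  rw [← offload_offload, real1_offload hN x hk]

end OffloadAux
namespace OffloadAux

variable {N : ℕ} {P : Params} {Ψ : (Fin N → ℕ) → ℝ}

lemma ak_eq_one {k j : ℕ} (h1 : 1 ≤ k) (h2 : k ≤ j) (h3 : k ≤ N) : ak N k j = 1 := by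
  unfold ak; split_ifs <;> omega

lemma ak_eq_zero_of_gt {k j : ℕ} (h : j < k) : ak N k j = 0 := by
  unfold ak; split_ifs <;> omega

lemma good_NSt (g : GoodF P N Ψ) (hN : 1 ≤ N) (hCp : 0 ≤ P.Cp)
    (hmu0 : 0 ≤ P.mu) (hmu1 : P.mu ≤ 1)
    (hp : ∀ k ≤ N, 0 ≤ P.p k)
    (hpsum : ∑ k ∈ Finset.range (N + 1), P.p k = 1) :
    GoodF P N (NSt P Ψ) := by
  constructor
  · -- monotonicity
    intro x y h
    have hc : S x 1 ≤ S y 1 := h 1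
    have hterm : ∀ k ∈ Finset.range (N + 1),
        P.p k * kterm P Ψ x k ≤
          P.p k * kterm P Ψ y k + P.p k * (((S y 1 - S x 1 : ℕ) : ℝ) * P.Cp) := by
      intro k hkmem
      have hpk : 0 ≤ P.p k := hp k (by have := Finset.mem_range.mp hkmem; omega)
      have h1 : Ψ (shift x + avec k) ≤
          Ψ (shift y + avec k) + ((S y 1 - S x 1 : ℕ) : ℝ) * P.Cp := by
        apply g.lip_iter hN hCp
        intro j
        cases j with
        | zero => rw [S_zero]; exact Nat.zero_le _
        | succ n =>
          rw [S_shift_avec, S_shift_avec, ak_one_succ hN n]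
          have ha := h (n + 1 + 1)
          have hb := S_mono x (show 1 ≤ n + 1 + 1 by omega)
          have hb' := S_mono y (show 1 ≤ n + 1 + 1 by omega)
          omega
      have h2 : Ψ (offload (shift x + avec k) 1) ≤
          Ψ (offload (shift y + avec k) 1) + ((S y 1 - S x 1 : ℕ) : ℝ) * P.Cp := by
        apply g.lip_iter hN hCp
        intro j
        cases j with
        | zero => rw [S_zero]; exact Nat.zero_le _
        | succ n =>
          rw [S_offload, S_offload, S_shift_avec, S_shift_avec, ak_one_succ hN n]
          have ha := h (n + 1 + 1)
          have hb := S_mono x (show 1 ≤ n + 1 + 1 by omega)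
          have hb' := S_mono y (show 1 ≤ n + 1 + 1 by omega)
          omega
      have hcCp : (0 : ℝ) ≤ ((S y 1 - S x 1 : ℕ) : ℝ) * P.Cp := by positivity
      unfold kterm
      nlinarith [mul_le_mul_of_nonneg_left h1 (show (0:ℝ) ≤ 1 - P.mu by linarith),
        mul_le_mul_of_nonneg_left h2 hmu0]
    have hsum := Finset.sum_le_sum hterm
    rw [Finset.sum_add_distrib, ← Finset.sum_mul, hpsum, one_mul] at hsum
    have hcast : ((S y 1 - S x 1 : ℕ) : ℝ) = (S y 1 : ℝ) - (S x 1 : ℝ) :=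
      Nat.cast_sub hc
    unfold NSt
    rw [hcast] at hsum
    nlinarith [hsum, hCp, hc]
  · -- Lipschitz
    intro x k hk1 hk2
    rcases eq_or_lt_of_le hk1 with hk1' | hk1'
    · -- k = 1
      have hkk : k = 1 := hk1'.symm
      subst hkk
      have id1 : shift (x + avec 1) = shift x := by
        apply funext_S; intro j
        rw [S_shift, S_shift, S_add_avec, S_add_avec,
          ak_eq_one le_rfl (by omega) hN, ak_eq_one le_rfl le_rfl hN]
        omega
      have hS1 : S (x + avec 1) 1 = S x 1 + 1 := by
        rw [S_add_avec, ak_eq_one le_rfl le_rfl hN]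
      have heq : NSt P Ψ (x + avec 1) = NSt P Ψ x + P.Cp := by
        have hterm : ∀ k' ∈ Finset.range (N + 1),
            P.p k' * kterm P Ψ (x + avec 1) k' = P.p k' * kterm P Ψ x k' := by
          intro k' _
          have : kterm P Ψ (x + avec 1) k' = kterm P Ψ x k' := by
            unfold kterm; rw [id1]
          rw [this]
        unfold NSt
        rw [Finset.sum_congr rfl hterm, hS1]
        push_cast
        ring
      rw [heq]
    · -- 2 ≤ k
      have hkk : 2 ≤ k := hk1'
      have id2 : shift (x + avec k) = shift x + avec (k - 1) := by
        apply funext_S; intro j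
        rw [S_shift, S_add_avec, S_add_avec, S_shift_avec,
          ak_eq_zero_of_gt (show 1 < k by omega)]
        have he : ak N k (j + 1) = ak N (k - 1) j := by unfold ak; split_ifs <;> omega
        have hβ := S_mono x (show 1 ≤ j + 1 by omega)
        omega
      have hS1' : S (x + avec k) 1 = S x 1 := by
        rw [S_add_avec, ak_eq_zero_of_gt (show 1 < k by omega)]
        omega
      have hterm : ∀ k' ∈ Finset.range (N + 1),
          P.p k' * kterm P Ψ (x + avec k) k' ≤
            P.p k' * kterm P Ψ x k' + P.p k' * P.Cp := by
        intro k' hk'mem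
        have hpk : 0 ≤ P.p k' := hp k' (by have := Finset.mem_range.mp hk'mem; omega)
        have hstate : shift (x + avec k) + avec k' = (shift x + avec k') + avec (k - 1) := by
          rw [id2, add_right_comm]
        have h1 : Ψ ((shift x + avec k') + avec (k - 1)) ≤ Ψ (shift x + avec k') + P.Cp :=
          g.lip _ (k - 1) (by omega) (by omega)
        have h2 : Ψ (offload ((shift x + avec k') + avec (k - 1)) 1) ≤
            Ψ (offload (shift x + avec k') 1) + P.Cp := by
          apply g.lip_dom (show 1 ≤ k - 1 by omega) (show k - 1 ≤ N by omega)
          intro j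
          rw [S_offload, S_offload, S_add_avec]
          omega
        unfold kterm
        rw [hstate]
        nlinarith [mul_le_mul_of_nonneg_left h1 (show (0:ℝ) ≤ 1 - P.mu by linarith),
          mul_le_mul_of_nonneg_left h2 hmu0]
      have hsum := Finset.sum_le_sum hterm
      rw [Finset.sum_add_distrib, ← Finset.sum_mul, hpsum, one_mul] at hsum
      unfold NSt
      rw [hS1']
      linarith
  · -- extended midpoint convexity
    intro x y a b
    set l1 := max a (S x 1) with hl1def
    set l2 := max b (S y 1) with hl2def
    have hl1c : l1 = a ∨ l1 = S x 1 := by rw [hl1def]; exact max_choice _ _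
    have hl1a : a ≤ l1 := by rw [hl1def]; exact le_max_left _ _
    have hl1b : S x 1 ≤ l1 := by rw [hl1def]; exact le_max_right _ _
    have hl2c : l2 = b ∨ l2 = S y 1 := by rw [hl2def]; exact max_choice _ _
    have hl2a : b ≤ l2 := by rw [hl2def]; exact le_max_left _ _
    have hl2b : S y 1 ≤ l2 := by rw [hl2def]; exact le_max_right _ _
    set c1 := ((l1 + l2 + 1) / 2 - (a + b + 1) / 2) -
      ((S x 1 + S y 1 + 1) / 2 - (a + b + 1) / 2) with hc1def
    set c2 := ((l1 + l2) / 2 - (a + b) / 2) -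
      ((S x 1 + S y 1) / 2 - (a + b) / 2) with hc2def
    have hhead : S (ofS N (mUp x y a b)) 1 + S (ofS N (mDn x y a b)) 1 + (c1 + c2)
        ≤ S (offload x a) 1 + S (offload y b) 1 := by
      rw [S_mUp, S_mDn, S_offload, S_offload]
      have := keyC a b (S x 1) (S y 1) l1 l2 hl1c hl1a hl1b hl2c hl2a hl2b
      omega
    have hk : ∀ k ∈ Finset.range (N + 1),
        P.p k * (kterm P Ψ (ofS N (mUp x y a b)) k + kterm P Ψ (ofS N (mDn x y a b)) k)
          ≤ P.p k * (kterm P Ψ (offload x a) k + kterm P Ψ (offload y b) k)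
            + P.p k * (((c1 : ℝ) + (c2 : ℝ)) * P.Cp) := by
      intro k hkmem
      have hkN : k ≤ N := by have := Finset.mem_range.mp hkmem; omega
      have hpk : 0 ≤ P.p k := hp k hkN
      have idx : offload (real1 N x l1 k) l1 = shift (offload x a) + avec k := by
        rw [hl1def]; exact real1_offload hN x hkN
      have idy : offload (real1 N y l2 k) l2 = shift (offload y b) + avec k := by
        rw [hl2def]; exact real1_offload hN y hkN
      have idx' : offload (real1 N x l1 k) (l1 + 1) =
          offload (shift (offload x a) + avec k) 1 := by
        rw [hl1def]; exact real1_offload' hN x hkN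
      have idy' : offload (real1 N y l2 k) (l2 + 1) =
          offload (shift (offload y b) + avec k) 1 := by
        rw [hl2def]; exact real1_offload' hN y hkN
      have bU : Ψ (shift (ofS N (mUp x y a b)) + avec k)
          ≤ Ψ (ofS N (mUp (real1 N x l1 k) (real1 N y l2 k) l1 l2)) + (c1 : ℝ) * P.Cp := by
        apply g.lip_iter hN hCp
        intro j
        cases j with
        | zero => rw [S_zero]; exact Nat.zero_le _
        | succ n =>
          rw [S_shift_avec, S_mUp, S_mUp, S_mUp, ak_one_succ hN n, Nat.mul_one,
            S_real1 hN x l1 hkN, S_real1 hN y l2 hkN,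
            if_neg (show ¬(n + 1 = 0) by omega), if_neg (show ¬(n + 1 = 0) by omega)]
          have hβ := S_mono x (show 1 ≤ n + 1 + 1 by omega)
          have hβ' := S_mono y (show 1 ≤ n + 1 + 1 by omega)
          have := keyU a b (S x 1) (S y 1) (S x (n + 1 + 1)) (S y (n + 1 + 1)) l1 l2
            (max (S x (n + 1 + 1)) l1) (max (S y (n + 1 + 1)) l2) (ak N k (n + 1))
            hβ hβ' (ak_le_one _ _) hl1c hl1a hl1b hl2c hl2a hl2b
            (max_choice _ _) (le_max_left _ _) (le_max_right _ _)
            (max_choice _ _) (le_max_left _ _) (le_max_right _ _)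
          omega
      have bD : Ψ (shift (ofS N (mDn x y a b)) + avec k)
          ≤ Ψ (ofS N (mDn (real1 N x l1 k) (real1 N y l2 k) l1 l2)) + (c2 : ℝ) * P.Cp := by
        apply g.lip_iter hN hCp
        intro j
        cases j with
        | zero => rw [S_zero]; exact Nat.zero_le _
        | succ n =>
          rw [S_shift_avec, S_mDn, S_mDn, S_mDn, ak_one_succ hN n, Nat.mul_one,
            S_real1 hN x l1 hkN, S_real1 hN y l2 hkN,
            if_neg (show ¬(n + 1 = 0) by omega), if_neg (show ¬(n + 1 = 0) by omega)]
          have hβ := S_mono x (show 1 ≤ n + 1 + 1 by omega)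
          have hβ' := S_mono y (show 1 ≤ n + 1 + 1 by omega)
          have := keyD a b (S x 1) (S y 1) (S x (n + 1 + 1)) (S y (n + 1 + 1)) l1 l2
            (max (S x (n + 1 + 1)) l1) (max (S y (n + 1 + 1)) l2) (ak N k (n + 1))
            hβ hβ' (ak_le_one _ _) hl1c hl1a hl1b hl2c hl2a hl2b
            (max_choice _ _) (le_max_left _ _) (le_max_right _ _)
            (max_choice _ _) (le_max_left _ _) (le_max_right _ _)
          omega
      have bUμ : Ψ (offload (shift (ofS N (mUp x y a b)) + avec k) 1)
          ≤ Ψ (ofS N (mUp (real1 N x l1 k) (real1 N y l2 k) (l1 + 1) (l2 + 1)))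
            + (c1 : ℝ) * P.Cp := by
        apply g.lip_iter hN hCp
        intro j
        cases j with
        | zero => rw [S_zero]; exact Nat.zero_le _
        | succ n =>
          rw [S_offload, S_shift_avec, S_mUp, S_mUp, S_mUp, ak_one_succ hN n, Nat.mul_one,
            S_real1 hN x l1 hkN, S_real1 hN y l2 hkN,
            if_neg (show ¬(n + 1 = 0) by omega), if_neg (show ¬(n + 1 = 0) by omega)]
          have hβ := S_mono x (show 1 ≤ n + 1 + 1 by omega)
          have hβ' := S_mono y (show 1 ≤ n + 1 + 1 by omega)
          have := keyUmu a b (S x 1) (S y 1) (S x (n + 1 + 1)) (S y (n + 1 + 1)) l1 l2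
            (max (S x (n + 1 + 1)) l1) (max (S y (n + 1 + 1)) l2) (ak N k (n + 1))
            hβ hβ' (ak_le_one _ _) hl1c hl1a hl1b hl2c hl2a hl2b
            (max_choice _ _) (le_max_left _ _) (le_max_right _ _)
            (max_choice _ _) (le_max_left _ _) (le_max_right _ _)
          omega
      have bDμ : Ψ (offload (shift (ofS N (mDn x y a b)) + avec k) 1)
          ≤ Ψ (ofS N (mDn (real1 N x l1 k) (real1 N y l2 k) (l1 + 1) (l2 + 1)))
            + (c2 : ℝ) * P.Cp := by
        apply g.lip_iter hN hCp
        intro j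
        cases j with
        | zero => rw [S_zero]; exact Nat.zero_le _
        | succ n =>
          rw [S_offload, S_shift_avec, S_mDn, S_mDn, S_mDn, ak_one_succ hN n, Nat.mul_one,
            S_real1 hN x l1 hkN, S_real1 hN y l2 hkN,
            if_neg (show ¬(n + 1 = 0) by omega), if_neg (show ¬(n + 1 = 0) by omega)]
          have hβ := S_mono x (show 1 ≤ n + 1 + 1 by omega)
          have hβ' := S_mono y (show 1 ≤ n + 1 + 1 by omega)
          have := keyDmu a b (S x 1) (S y 1) (S x (n + 1 + 1)) (S y (n + 1 + 1)) l1 l2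
            (max (S x (n + 1 + 1)) l1) (max (S y (n + 1 + 1)) l2) (ak N k (n + 1))
            hβ hβ' (ak_le_one _ _) hl1c hl1a hl1b hl2c hl2a hl2b
            (max_choice _ _) (le_max_left _ _) (le_max_right _ _)
            (max_choice _ _) (le_max_left _ _) (le_max_right _ _)
          omega
      have m1 := g.mcl (real1 N x l1 k) (real1 N y l2 k) l1 l2
      rw [idx, idy] at m1
      have m2 := g.mcl (real1 N x l1 k) (real1 N y l2 k) (l1 + 1) (l2 + 1)
      rw [idx', idy'] at m2
      have hg1 : Ψ (shift (ofS N (mUp x y a b)) + avec k)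
          + Ψ (shift (ofS N (mDn x y a b)) + avec k)
          ≤ Ψ (shift (offload x a) + avec k) + Ψ (shift (offload y b) + avec k)
            + ((c1 : ℝ) + (c2 : ℝ)) * P.Cp := by linarith
      have hgμ : Ψ (offload (shift (ofS N (mUp x y a b)) + avec k) 1)
          + Ψ (offload (shift (ofS N (mDn x y a b)) + avec k) 1)
          ≤ Ψ (offload (shift (offload x a) + avec k) 1)
            + Ψ (offload (shift (offload y b) + avec k) 1)
            + ((c1 : ℝ) + (c2 : ℝ)) * P.Cp := by linarith
      have hinner : kterm P Ψ (ofS N (mUp x y a b)) k + kterm P Ψ (ofS N (mDn x y a b)) k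
          ≤ kterm P Ψ (offload x a) k + kterm P Ψ (offload y b) k
            + ((c1 : ℝ) + (c2 : ℝ)) * P.Cp := by
        unfold kterm
        nlinarith [mul_le_mul_of_nonneg_left hg1 (show (0:ℝ) ≤ 1 - P.mu by linarith),
          mul_le_mul_of_nonneg_left hgμ hmu0]
      calc P.p k * (kterm P Ψ (ofS N (mUp x y a b)) k + kterm P Ψ (ofS N (mDn x y a b)) k)
          ≤ P.p k * (kterm P Ψ (offload x a) k + kterm P Ψ (offload y b) k
            + ((c1 : ℝ) + (c2 : ℝ)) * P.Cp) := mul_le_mul_of_nonneg_left hinner hpk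
        _ = _ := by ring
    have hsum := Finset.sum_le_sum hk
    rw [Finset.sum_add_distrib, ← Finset.sum_mul, hpsum, one_mul] at hsum
    have hheadR : (S (ofS N (mUp x y a b)) 1 : ℝ) + (S (ofS N (mDn x y a b)) 1 : ℝ)
        + ((c1 : ℝ) + (c2 : ℝ)) ≤ (S (offload x a) 1 : ℝ) + (S (offload y b) 1 : ℝ) := by
      exact_mod_cast hhead
    unfold NSt
    have e1 : ∀ (u v : Fin N → ℕ),
        ∑ k ∈ Finset.range (N + 1), P.p k * (kterm P Ψ u k + kterm P Ψ v k)
          = (∑ k ∈ Finset.range (N + 1), P.p k * kterm P Ψ u k)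
            + ∑ k ∈ Finset.range (N + 1), P.p k * kterm P Ψ v k := by
      intro u v
      simp only [mul_add]
      rw [Finset.sum_add_distrib]
    rw [e1, e1] at hsum
    nlinarith [hsum, mul_le_mul_of_nonneg_left hheadR hCp]

end OffloadAux
namespace OffloadAux

variable {N : ℕ} {P : Params}

/-- the expected cost-to-go function studied in the induction -/
noncomputable def NT (P : Params) (t : ℕ) (v : Fin N → ℕ) : ℝ :=
  P.Cp * (S v 1 : ℝ) + GA P t v 0

lemma GA_offload (t : ℕ) (x : Fin N → ℕ) (L : ℕ) :
    GA P t x L = GA P t (offload x L) 0 := by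
  cases t with
  | zero => rfl
  | succ t =>
    have h : ∀ k, sdd x L k = sdd (offload x L) 0 k := by
      intro k; funext i
      show shift (offload x L) i + avec k i = shift (offload (offload x L) 0) i + avec k i
      rw [offload_zero]
    have h' : ∀ k, sd x L k = sd (offload x L) 0 k := by
      intro k
      show proc (sdd x L k) = proc (sdd (offload x L) 0 k)
      rw [h]
    show GA P (t + 1) x L = GA P (t + 1) (offload x L) 0
    simp only [GA, h, h']

lemma inf'_affine {s : Finset ℕ} (hs : s.Nonempty) (f : ℕ → ℝ) (aa c : ℝ) (ha : 0 ≤ aa) :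
    s.inf' hs (fun L => aa * f L + c) = aa * s.inf' hs f + c := by
  apply le_antisymm
  · obtain ⟨L, hL, hval⟩ := Finset.exists_mem_eq_inf' hs f
    calc s.inf' hs (fun L => aa * f L + c) ≤ aa * f L + c := Finset.inf'_le _ hL
      _ = aa * s.inf' hs f + c := by rw [hval]
  · apply Finset.le_inf'
    intro L hL
    have h1 : s.inf' hs f ≤ f L := Finset.inf'_le _ hL
    nlinarith

lemma J_eq (hpa0 : 0 ≤ P.pa) (t : ℕ) (x : Fin N → ℕ) :
    JofG P (GA P t) x = JJ P (NT P t) x := by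
  unfold JofG
  have hterm : ∀ L ∈ Finset.range (tot x + 1),
      cost P x L + P.pa * GA P t x L + (1 - P.pa) * GA P t x 0 =
        P.pa * (P.Co * L + NT P t (offload x L)) + (1 - P.pa) * NT P t x := by
    intro L _
    unfold cost costA costNA NT
    rw [GA_offload t x L, GA_offload t x 0, offload_zero]
    have hS : ((S x 1 - L : ℕ) : ℝ) = ((S (offload x L) 1 : ℕ) : ℝ) := by rw [S_offload]
    rw [hS]
    ring
  rw [Finset.inf'_congr (Finset.nonempty_range_iff.mpr (Nat.succ_ne_zero _)) rfl hterm]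
  rw [inf'_affine _ _ _ _ hpa0]
  rfl

lemma NT_succ (hpa0 : 0 ≤ P.pa) (t : ℕ) (v : Fin N → ℕ) :
    NT P (t + 1) v = NSt P (JJ P (NT P t)) v := by
  have hJ : (JofG P (GA P t) : (Fin N → ℕ) → ℝ) = JJ P (NT P t) := funext (J_eq hpa0 t)
  have hsdd : ∀ k, sdd v 0 k = shift v + avec k := by
    intro k; funext i
    show shift (offload v 0) i + avec k i = shift v i + avec k i
    rw [offload_zero]
  have hsd : ∀ k, sd v 0 k = offload (shift v + avec k) 1 := by
    intro k
    show proc (sdd v 0 k) = _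
    rw [hsdd, proc_eq_offload_one]
  show P.Cp * (S v 1 : ℝ) + GA P (t + 1) v 0 =
    P.Cp * (S v 1 : ℝ) + ∑ k ∈ Finset.range (N + 1), P.p k * kterm P (JJ P (NT P t)) v k
  simp only [GA, hsdd, hsd, hJ]
  congr 1
  rw [Finset.mul_sum, Finset.mul_sum, ← Finset.sum_add_distrib]
  apply Finset.sum_congr rfl
  intro k _
  show P.mu * (P.p k * JJ P (NT P t) (offload (shift v + avec k) 1))
      + (1 - P.mu) * (P.p k * JJ P (NT P t) (shift v + avec k))
    = P.p k * kterm P (JJ P (NT P t)) v k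
  unfold kterm
  ring

lemma good_NT (hN : 1 ≤ N) (hCo : 0 < P.Co) (hCoCp : P.Co < P.Cp)
    (hpa0 : 0 ≤ P.pa) (hpa1 : P.pa ≤ 1) (hmu0 : 0 ≤ P.mu) (hmu1 : P.mu ≤ 1)
    (hp : ∀ k ≤ N, 0 ≤ P.p k)
    (hpsum : ∑ k ∈ Finset.range (N + 1), P.p k = 1) :
    ∀ t, GoodF P N (NT P t) := by
  have hCp : 0 ≤ P.Cp := by linarith
  intro t
  induction t with
  | zero =>
    have hNT0 : ∀ v : Fin N → ℕ, NT P 0 v = P.Cp * (S v 1 : ℝ) := by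
      intro v
      show P.Cp * (S v 1 : ℝ) + GA P 0 v 0 = _
      show P.Cp * (S v 1 : ℝ) + 0 = _
      ring
    constructor
    · intro x y h
      rw [hNT0, hNT0]
      have := h 1
      have hc : (S x 1 : ℝ) ≤ (S y 1 : ℝ) := by exact_mod_cast this
      nlinarith
    · intro x k hk1 hk2
      rw [hNT0, hNT0, S_add_avec]
      have := ak_le_one (N := N) k 1
      have hc : (S x 1 + ak N k 1 : ℝ) ≤ (S x 1 : ℝ) + 1 := by
        have : S x 1 + ak N k 1 ≤ S x 1 + 1 := by omega
        exact_mod_cast this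
      push_cast
      nlinarith
    · intro x y a b
      rw [hNT0, hNT0, hNT0, hNT0, S_mUp, S_mDn, S_offload, S_offload]
      have harith : ((S x 1 + S y 1 + 1) / 2 - (a + b + 1) / 2)
          + ((S x 1 + S y 1) / 2 - (a + b) / 2) ≤ (S x 1 - a) + (S y 1 - b) := by
        omega
      have hcast : (((S x 1 + S y 1 + 1) / 2 - (a + b + 1) / 2 : ℕ) : ℝ)
          + (((S x 1 + S y 1) / 2 - (a + b) / 2 : ℕ) : ℝ)
          ≤ ((S x 1 - a : ℕ) : ℝ) + ((S y 1 - b : ℕ) : ℝ) := by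
        exact_mod_cast harith
      nlinarith
  | succ t ih =>
    have heq : (NT P (t + 1) : (Fin N → ℕ) → ℝ) = NSt P (JJ P (NT P t)) :=
      funext (NT_succ hpa0 t)
    rw [heq]
    exact good_NSt (good_JJ ih hN (le_of_lt hCo) hCp hpa0 hpa1) hN hCp hmu0 hmu1 hp hpsum

end OffloadAux
open OffloadAux in
/-- for adjacent states, 0 is the unique optimal offloading
decision of s^a iff J_T(s^a) − J_T(s) < C_o. -/
theorem nonOffloading_iff_J_diff_lt {N : ℕ} (hN : 1 ≤ N)
    (P : Params) (hCo : 0 < P.Co) (hCoCp : P.Co < P.Cp)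
    (hpa0 : 0 ≤ P.pa) (hpa1 : P.pa ≤ 1) (hmu0 : 0 ≤ P.mu) (hmu1 : P.mu ≤ 1)
    (hp : ∀ k ≤ N, 0 ≤ P.p k) (hpsum : ∑ k ∈ Finset.range (N + 1), P.p k = 1)
    (T : ℕ) (hT : 1 ≤ T) (s sa : Fin N → ℕ) (hadj : Adjacent s sa) :
    (∀ L, 1 ≤ L → L ≤ tot sa → JA P T sa 0 < JA P T sa L) ↔
      J P T sa - J P T s < P.Co := by
  classical
  have hCo' : (0:ℝ) ≤ P.Co := le_of_lt hCo
  -- extract the adjacency structure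
  obtain ⟨j, hj1, hjN, hsa, hzero⟩ :
      ∃ j, 1 ≤ j ∧ j ≤ N ∧ sa = s + avec j ∧ ∀ i, i < j → S s i = 0 := by
    rcases hadj with ⟨hs0, j, hj1, hjd, hsa⟩ | ⟨hs0, j, hj1, hjN, hsa⟩
    · have htot : 0 < tot s := by
        by_contra h0
        push_neg at h0
        apply hs0
        funext i
        have h1 := S_succ s i.isLt
        have h2 := S_le_tot s ((i : ℕ) + 1)
        have h3 : (⟨(i : ℕ), i.isLt⟩ : Fin N) = i := rfl
        rw [h3] at h1
        show s i = 0
        omega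
      have hmemN : N ∈ {i | 0 < S s i} := htot
      have hdN : dmin s ≤ N := Nat.sInf_le hmemN
      refine ⟨j, hj1, le_trans hjd hdN, hsa, ?_⟩
      intro i hi
      have hlt : i < dmin s := by omega
      have hnot := Nat.notMem_of_lt_sInf hlt
      have : ¬ (0 < S s i) := hnot
      omega
    · refine ⟨j, hj1, hjN, ?_, ?_⟩
      · rw [hsa, hs0, zero_add]
      · intro i _
        rw [hs0, S_eq]
        simp
  subst hsa
  have g := good_NT hN hCo hCoCp hpa0 hpa1 hmu0 hmu1 hp hpsum (T - 1)
  -- structural identities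
  have hoff : ∀ L, offload (s + avec j) (L + 1) = offload s L := by
    intro L
    apply funext_S
    intro i
    rw [S_offload, S_offload, S_add_avec]
    rcases Nat.lt_or_ge i j with hij | hij
    · rw [ak_eq_zero_of_gt hij, hzero i hij]
      omega
    · rw [ak_eq_one hj1 hij hjN]
      omega
  have htot : tot (s + avec j) = tot s + 1 := by
    show S _ N = S s N + 1
    rw [S_add_avec, ak_eq_one hj1 hjN hjN]
  have hone : offload (s + avec j) 1 = s := by
    have := hoff 0
    rwa [offload_zero] at this
  -- JA in terms of NT
  have hJA : ∀ L, JA P T (s + avec j) L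
      = P.Co * L + NT P (T - 1) (offload (s + avec j) L) := by
    intro L
    show costA P (s + avec j) L + GA P (T - 1) (s + avec j) L = _
    unfold costA NT
    rw [GA_offload (T - 1)]
    have hS : ((S (s + avec j) 1 - L : ℕ) : ℝ)
        = ((S (offload (s + avec j) L) 1 : ℕ) : ℝ) := by rw [S_offload]
    rw [hS]
    ring
  -- chain convexity of NT along offloads of sa
  have hconv : ∀ l, 2 * NT P (T - 1) (offload (s + avec j) (l + 1))
      ≤ NT P (T - 1) (offload (s + avec j) l)
        + NT P (T - 1) (offload (s + avec j) (l + 2)) := by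
    intro l
    have hup : ofS N (mUp (s + avec j) (s + avec j) l (l + 2))
        = offload (s + avec j) (l + 1) := by
      apply funext_S
      intro i
      rw [S_mUp, S_offload]
      omega
    have hdn : ofS N (mDn (s + avec j) (s + avec j) l (l + 2))
        = offload (s + avec j) (l + 1) := by
      apply funext_S
      intro i
      rw [S_mDn, S_offload]
      omega
    have hm := g.mcl (s + avec j) (s + avec j) l (l + 2)
    rw [hup, hdn] at hm
    linarith
  have hdec : ∀ l, NT P (T - 1) (offload (s + avec j) l)
      - NT P (T - 1) (offload (s + avec j) (l + 1))
      ≤ NT P (T - 1) (offload (s + avec j) 0) - NT P (T - 1) (offload (s + avec j) 1) := by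
    intro l
    induction l with
    | zero => exact le_refl _
    | succ n ih =>
      have := hconv n
      linarith
  -- the core convexity consequence
  have hcore : ∀ L0 : ℕ, 1 ≤ L0 →
      P.Co * L0 + NT P (T - 1) (offload (s + avec j) L0) ≤ NT P (T - 1) (s + avec j) →
      P.Co + NT P (T - 1) s ≤ NT P (T - 1) (s + avec j) := by
    intro L0 hL01 hle
    have htel : (∑ i ∈ Finset.range L0, (NT P (T - 1) (offload (s + avec j) i)
          - NT P (T - 1) (offload (s + avec j) (i + 1))))
        = NT P (T - 1) (offload (s + avec j) 0)
          - NT P (T - 1) (offload (s + avec j) L0) :=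
      Finset.sum_range_sub' (fun i => NT P (T - 1) (offload (s + avec j) i)) L0
    have hbound : NT P (T - 1) (offload (s + avec j) 0)
        - NT P (T - 1) (offload (s + avec j) L0)
        ≤ L0 * (NT P (T - 1) (offload (s + avec j) 0)
          - NT P (T - 1) (offload (s + avec j) 1)) := by
      rw [← htel]
      calc (∑ i ∈ Finset.range L0, (NT P (T - 1) (offload (s + avec j) i)
            - NT P (T - 1) (offload (s + avec j) (i + 1))))
          ≤ (Finset.range L0).card • (NT P (T - 1) (offload (s + avec j) 0)
            - NT P (T - 1) (offload (s + avec j) 1)) :=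
            Finset.sum_le_card_nsmul _ _ _ (fun i _ => hdec i)
        _ = L0 * (NT P (T - 1) (offload (s + avec j) 0)
            - NT P (T - 1) (offload (s + avec j) 1)) := by
            rw [Finset.card_range]
            exact nsmul_eq_mul _ _
    rw [offload_zero, hone] at hbound
    have hL0R : (1 : ℝ) ≤ (L0 : ℝ) := by exact_mod_cast hL01
    nlinarith [hbound, hle, hL0R]
  -- MF facts
  obtain ⟨Ls, hLs, hLsval⟩ := MF_exists (P := P) (Φ := NT P (T - 1)) s
  obtain ⟨La, hLa, hLaval⟩ := MF_exists (P := P) (Φ := NT P (T - 1)) (s + avec j)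
  have hms_le : MF P (NT P (T - 1)) s ≤ NT P (T - 1) s := by
    have := MF_le (P := P) (Φ := NT P (T - 1)) hCo' s 0
    rwa [offload_zero, Nat.cast_zero, mul_zero, zero_add] at this
  have hJsa : J P T (s + avec j) = JJ P (NT P (T - 1)) (s + avec j) := J_eq hpa0 _ _
  have hJs : J P T s = JJ P (NT P (T - 1)) s := J_eq hpa0 _ _
  constructor
  · -- forward direction
    intro HL
    have hkey : NT P (T - 1) (s + avec j) < P.Co + MF P (NT P (T - 1)) s := by
      have huse := HL (Ls + 1) (by omega) (by omega)
      rw [hJA 0, hJA (Ls + 1), hoff Ls, offload_zero] at huse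
      rw [hLsval]
      push_cast at huse
      linarith
    have hMFsa_le0 : MF P (NT P (T - 1)) (s + avec j) ≤ NT P (T - 1) (s + avec j) := by
      have := MF_le (P := P) (Φ := NT P (T - 1)) hCo' (s + avec j) 0
      rwa [offload_zero, Nat.cast_zero, mul_zero, zero_add] at this
    rw [hJsa, hJs]
    unfold JJ
    have hX : MF P (NT P (T - 1)) (s + avec j) - MF P (NT P (T - 1)) s < P.Co := by
      linarith
    have hY : NT P (T - 1) (s + avec j) - NT P (T - 1) s < P.Co := by
      linarith
    rcases eq_or_lt_of_le hpa0 with hpa | hpa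
    · rw [← hpa]
      ring_nf
      linarith [hY]
    · nlinarith [mul_lt_mul_of_pos_left hX hpa,
        mul_le_mul_of_nonneg_left (le_of_lt hY) (show (0:ℝ) ≤ 1 - P.pa by linarith)]
  · -- reverse direction (contrapositive)
    intro HR
    by_contra hcon
    push_neg at hcon
    obtain ⟨L0, hL01, hL0le, hL0⟩ := hcon
    rw [hJA 0, hJA L0, Nat.cast_zero, mul_zero, zero_add, offload_zero] at hL0
    have hstep := hcore L0 hL01 hL0
    have hMFge : P.Co + MF P (NT P (T - 1)) s ≤ MF P (NT P (T - 1)) (s + avec j) := by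
      rw [hLaval]
      cases La with
      | zero =>
        rw [Nat.cast_zero, mul_zero, zero_add, offload_zero]
        linarith
      | succ n =>
        rw [hoff n]
        have hn : n ≤ tot s := by omega
        have hmem := MF_le_of_mem (P := P) (Φ := NT P (T - 1)) s hn
        push_cast
        linarith
    have hfin : P.Co ≤ J P T (s + avec j) - J P T s := by
      rw [hJsa, hJs]
      unfold JJ
      have t1 := mul_le_mul_of_nonneg_left hMFge hpa0
      have t2 : (1 - P.pa) * (P.Co + NT P (T - 1) s)
          ≤ (1 - P.pa) * NT P (T - 1) (s + avec j) :=
        mul_le_mul_of_nonneg_left hstep (by linarith)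
      nlinarith [t1, t2]
    linarith
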